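/- arXiv:math-ph/0511026 — 2 statements merged into one kernel-verified Lean document; each statement's English description precedes it below -/
import Mathlib

section
/- Let f : ℝ → ℝ be locally bounded, and suppose there exist a ∈ ℝ and τ > 0 such that f(t+τ) − f(t) → a as t → ∞. Then f(t)/t → a/τ as t → ∞. -/
open Filter

lemma aux6 (f : ℝ → ℝ) (a τ ε' T : ℝ) (hτ : 0 ≤ τ)
    (h : ∀ t, T ≤ t → |f (t + τ) - f t - a| ≤ ε') :
    ∀ n : ℕ, ∀ s, T ≤ s → |f (s + n * τ) - f s - n * a| ≤ n * ε' := by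
  intro n
  induction n with
  | zero => intro s hs; simp
  | succ n ih =>
    intro s hs
    have hnn : (0:ℝ) ≤ (n:ℝ) := n.cast_nonneg
    have h1 : T ≤ s + n * τ := by nlinarith
    have h2 := h (s + n * τ) h1
    have h3 := ih s hs
    have key : f (s + ((n:ℕ)+1 : ℕ) * τ) - f s - (((n:ℕ)+1 : ℕ) : ℝ) * a
        = (f ((s + n * τ) + τ) - f (s + n * τ) - a) + (f (s + n * τ) - f s - n * a) := by
      push_cast
      ring_nf
    rw [key]
    calc |(f ((s + n * τ) + τ) - f (s + n * τ) - a) + (f (s + n * τ) - f s - n * a)|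
        ≤ |f ((s + n * τ) + τ) - f (s + n * τ) - a| + |f (s + n * τ) - f s - n * a| :=
          abs_add_le _ _
      _ ≤ ε' + n * ε' := add_le_add h2 h3
      _ = (((n:ℕ)+1 : ℕ) : ℝ) * ε' := by push_cast; ring

/-- If `f : ℝ → ℝ` is locally bounded and `f(t+τ) - f(t) → a` as `t → ∞` for some `τ > 0`,
then `f(t)/t → a/τ` as `t → ∞`. -/
theorem stmt6 (f : ℝ → ℝ) (a τ : ℝ) (hτ : 0 < τ)
    (hloc : ∀ K : Set ℝ, IsCompact K → ∃ C : ℝ, ∀ t ∈ K, |f t| ≤ C)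
    (hlim : Filter.Tendsto (fun t => f (t + τ) - f t) Filter.atTop (nhds a)) :
    Filter.Tendsto (fun t => f t / t) Filter.atTop (nhds (a / τ)) := by
  rw [Metric.tendsto_atTop] at hlim ⊢
  intro ε hε
  obtain ⟨T₀, hT₀⟩ := hlim (ε * τ / 3) (by positivity)
  set T := max T₀ 1 with hTdef
  have hT1 : (1:ℝ) ≤ T := le_max_right _ _
  have hstep : ∀ t, T ≤ t → |f (t + τ) - f t - a| ≤ ε * τ / 3 := by
    intro t ht
    have h := hT₀ t (le_trans (le_max_left _ _) ht)
    rw [Real.dist_eq] at h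
    linarith
  obtain ⟨C, hC⟩ := hloc (Set.Icc T (T + τ)) isCompact_Icc
  have hC0 : 0 ≤ C := le_trans (abs_nonneg _) (hC T ⟨le_refl _, by linarith⟩)
  refine ⟨max T (max (3 * (C + 1) / ε) (3 * (|a| + 1) * (T + τ) / (ε * τ))), fun t ht => ?_⟩
  have htT : T ≤ t := le_trans (le_max_left _ _) ht
  have ht1 : (1:ℝ) ≤ t := le_trans hT1 htT
  have ht0 : (0:ℝ) < t := by linarith
  have htC : 3 * (C + 1) / ε ≤ t := le_trans (le_trans (le_max_left _ _) (le_max_right _ _)) ht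
  have htA : 3 * (|a| + 1) * (T + τ) / (ε * τ) ≤ t :=
    le_trans (le_trans (le_max_right _ _) (le_max_right _ _)) ht
  set n := ⌊(t - T) / τ⌋₊ with hn
  have hdiv0 : 0 ≤ (t - T) / τ := div_nonneg (by linarith) hτ.le
  have h1 : (n:ℝ) * τ ≤ t - T := by
    have h := Nat.floor_le hdiv0
    calc (n:ℝ) * τ ≤ ((t - T)/τ) * τ := by nlinarith
      _ = t - T := div_mul_cancel₀ _ hτ.ne'
  have h2 : t - T < ((n:ℝ) + 1) * τ := by
    have h := Nat.lt_floor_add_one ((t - T)/τ)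
    have h' : (t - T)/τ * τ < ((n:ℝ) + 1) * τ := by nlinarith
    rwa [div_mul_cancel₀ _ hτ.ne'] at h'
  set s := t - n * τ with hs
  have hsT : T ≤ s := by simp only [hs]; linarith
  have hsub : s ≤ T + τ := by simp only [hs]; nlinarith
  have hfs : |f s| ≤ C := hC s ⟨hsT, hsub⟩
  have hkey : |f t - f s - n * a| ≤ n * (ε * τ / 3) := by
    have h := aux6 f a τ (ε * τ / 3) T hτ.le hstep n s hsT
    have hts : s + n * τ = t := by simp only [hs]; ring
    rwa [hts] at h
  rw [Real.dist_eq]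
  have hdecomp : f t / t - a / τ
      = (f t - f s - n * a) / t + f s / t + (-(a * s) / (t * τ)) := by
    field_simp
    simp only [hs]
    ring
  rw [hdecomp]
  have hnn : (0:ℝ) ≤ (n:ℝ) := n.cast_nonneg
  have e1 : |(f t - f s - n * a) / t| ≤ ε / 3 := by
    rw [abs_div, abs_of_pos ht0]
    rw [div_le_iff₀ ht0]
    calc |f t - f s - n * a| ≤ n * (ε * τ / 3) := hkey
      _ ≤ ε / 3 * t := by nlinarith
  have e2 : |f s / t| < ε / 3 := by
    rw [abs_div, abs_of_pos ht0, div_lt_iff₀ ht0]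
    have : 3 * (C + 1) ≤ ε * t := by
      rw [div_le_iff₀ hε] at htC; linarith
    nlinarith [abs_nonneg (f s)]
  have e3 : |(-(a * s)) / (t * τ)| < ε / 3 := by
    have hs0 : 0 < s := by linarith
    have htτ : 0 < t * τ := mul_pos ht0 hτ
    rw [abs_div, abs_of_pos htτ, abs_neg, abs_mul, abs_of_pos hs0, div_lt_iff₀ htτ]
    have hA : 3 * (|a| + 1) * (T + τ) ≤ ε * τ * t := by
      rw [div_le_iff₀ (by positivity : (0:ℝ) < ε * τ)] at htA; linarith
    nlinarith [abs_nonneg a, hsub]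
  calc |(f t - f s - n * a) / t + f s / t + (-(a * s) / (t * τ))|
      ≤ |(f t - f s - n * a) / t + f s / t| + |(-(a * s)) / (t * τ)| := abs_add_le _ _
    _ ≤ |(f t - f s - n * a) / t| + |f s / t| + |(-(a * s)) / (t * τ)| := by
        gcongr; exact abs_add_le _ _
    _ < ε := by linarith
end

section
/- Let M be a square complex matrix with 1 a simple eigenvalue with spectral projection π, and such that every other eigenvalue either has modulus strictly less than one or has modulus exactly one and is semisimple. Then the Cesàro averages satisfy ‖(1/N) Σ_{n=0}^{N−1} M^n − π‖ ≤ C/N for some constant C and all N ≥ 1. -/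
open Filter Finset

section Aux

variable {E : Type*} [NormedAddCommGroup E] [InnerProductSpace ℂ E] [FiniteDimensional ℂ E]

/-- Orbit of a generalized eigenvector with eigenvalue of modulus `< 1` is bounded. -/
lemma orbit_bdd_lt (B : E →L[ℂ] E) (μ : ℂ) (hμ : ‖μ‖ < 1) (y : E)
    (hy : y ∈ Module.End.maxGenEigenspace (B : E →ₗ[ℂ] E) μ) :
    ∃ K : ℝ, ∀ n : ℕ, ‖(B ^ n) y‖ ≤ K := by
  rw [Module.End.mem_maxGenEigenspace] at hy
  obtain ⟨k, hk⟩ := hy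
  set f : Module.End ℂ E := (B : E →ₗ[ℂ] E) with hf
  set A : Module.End ℂ E := f - μ • 1 with hA
  have hcoe : ∀ n : ℕ, ((B ^ n : E →L[ℂ] E) : E →ₗ[ℂ] E) = f ^ n := by
    intro n
    induction n with
    | zero => rfl
    | succ n ih => rw [pow_succ, pow_succ, ← ih]; rfl
  have hBn : ∀ n : ℕ, (B ^ n) y = (f ^ n) y := by
    intro n
    rw [← hcoe]
    rfl
  have hApow : ∀ m, k ≤ m → (A ^ m) y = 0 := by
    intro m hm
    obtain ⟨j, rfl⟩ := Nat.exists_eq_add_of_le hm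
    rw [add_comm, pow_add, Module.End.mul_apply, hk, map_zero]
  by_cases hμ0 : μ = 0
  · -- here A = f, so f ^ n y = 0 for n ≥ k
    subst hμ0
    have hAf : A = f := by rw [hA]; simp
    refine ⟨∑ m ∈ range k, ‖(f ^ m) y‖, ?_⟩
    intro n
    rw [hBn]
    rcases lt_or_ge n k with hn | hn
    · exact Finset.single_le_sum (f := fun m => ‖(f ^ m) y‖)
        (fun m _ => norm_nonneg _) (Finset.mem_range.mpr hn)
    · rw [← hAf, hApow n hn, norm_zero]
      exact Finset.sum_nonneg fun m _ => norm_nonneg _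
  · have hfAe : f = A + μ • 1 := by rw [hA, sub_add_cancel]
    have hcomm : Commute A (μ • (1 : Module.End ℂ E)) := (Commute.one_right A).smul_right μ
    set c : ℕ → ℝ := fun m => ‖(A ^ m) y‖ with hc
    set F : ℕ → ℝ := fun n => ∑ m ∈ range k, (n.choose m : ℝ) * (‖μ‖ ^ (n - m) * c m) with hF
    have hterm : ∀ n m : ℕ,
        ‖(A ^ m * (μ • (1 : Module.End ℂ E)) ^ (n - m) * ((n.choose m : ℕ) : Module.End ℂ E)) y‖
          = (n.choose m : ℝ) * (‖μ‖ ^ (n - m) * c m) := by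
      intro n m
      have : (A ^ m * (μ • (1 : Module.End ℂ E)) ^ (n - m) * ((n.choose m : ℕ) : Module.End ℂ E)) y
          = ((n.choose m : ℕ) : ℂ) • (μ ^ (n - m) • (A ^ m) y) := by
        rw [Module.End.mul_apply, Module.End.mul_apply, Module.End.natCast_apply,
          ← Nat.cast_smul_eq_nsmul ℂ, smul_pow, one_pow, map_smul, map_smul,
          LinearMap.smul_apply, Module.End.one_apply, map_smul]
      rw [this, norm_smul, norm_smul, norm_pow, Complex.norm_natCast]
    have claim1 : ∀ n, ‖(f ^ n) y‖ ≤ F n := by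
      intro n
      have e0 : (f ^ n) y = ∑ m ∈ range (n + 1),
          (A ^ m * (μ • (1 : Module.End ℂ E)) ^ (n - m) * ((n.choose m : ℕ) : Module.End ℂ E)) y := by
        rw [hfAe, hcomm.add_pow, LinearMap.sum_apply]
      rw [e0]
      refine le_trans (norm_sum_le _ _) ?_
      have e1 : ∑ m ∈ range (n + 1),
          ‖(A ^ m * (μ • (1 : Module.End ℂ E)) ^ (n - m) * ((n.choose m : ℕ) : Module.End ℂ E)) y‖
          = ∑ m ∈ range (n + 1), (n.choose m : ℝ) * (‖μ‖ ^ (n - m) * c m) :=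
        Finset.sum_congr rfl fun m _ => hterm n m
      rw [e1]
      have e2 : ∑ m ∈ range (n + 1), (n.choose m : ℝ) * (‖μ‖ ^ (n - m) * c m)
          = ∑ m ∈ (range (n + 1)).filter (· < k), (n.choose m : ℝ) * (‖μ‖ ^ (n - m) * c m) := by
        refine (Finset.sum_filter_of_ne ?_).symm
        intro m _ hne
        by_contra hmk
        push_neg at hmk
        apply hne
        have : c m = 0 := by rw [hc]; simp [hApow m hmk]
        rw [this]; ring
      rw [e2, hF]
      refine Finset.sum_le_sum_of_subset_of_nonneg ?_ ?_
      · intro m hm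
        exact Finset.mem_range.mpr (Finset.mem_filter.mp hm).2
      · intro m _ _
        positivity
    have hcpos : ∀ j, 0 ≤ c j := by
      intro j; simp only [hc]; exact norm_nonneg _
    have claim2 : Tendsto F atTop (nhds 0) := by
      have h0 : (0 : ℝ) = ∑ _m ∈ range k, (0 : ℝ) := by simp
      rw [h0, hF]
      refine tendsto_finset_sum _ fun m _ => ?_
      have hr : (0:ℝ) < ‖μ‖ := norm_pos_iff.mpr hμ0
      refine squeeze_zero' (f := fun n : ℕ => (n.choose m : ℝ) * (‖μ‖ ^ (n - m) * c m)) (g := fun n => ((n : ℝ) ^ m * ‖μ‖ ^ n) * (c m / ‖μ‖ ^ m))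
        (Eventually.of_forall fun n => mul_nonneg (Nat.cast_nonneg _)
          (mul_nonneg (pow_nonneg (norm_nonneg μ) _) (hcpos m))) ?_ ?_
      · filter_upwards [eventually_ge_atTop m] with n hn
        have h1 : (n.choose m : ℝ) ≤ (n : ℝ) ^ m := by
          exact_mod_cast Nat.choose_le_pow n m
        have h2 : ‖μ‖ ^ (n - m) = ‖μ‖ ^ n / ‖μ‖ ^ m := by
          rw [pow_sub₀ _ (ne_of_gt hr) hn]
          rw [div_eq_mul_inv]
        calc (n.choose m : ℝ) * (‖μ‖ ^ (n - m) * c m)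
            ≤ (n : ℝ) ^ m * (‖μ‖ ^ (n - m) * c m) := by
              apply mul_le_mul_of_nonneg_right h1; positivity
          _ = ((n : ℝ) ^ m * ‖μ‖ ^ n) * (c m / ‖μ‖ ^ m) := by
              rw [h2]; field_simp
      · have := (tendsto_pow_const_mul_const_pow_of_lt_one m (norm_nonneg μ) hμ).mul_const
          (c m / ‖μ‖ ^ m)
        simpa using this
    obtain ⟨K, hK⟩ := claim2.bddAbove_range
    refine ⟨K, fun n => ?_⟩
    rw [hBn]
    exact le_trans (claim1 n) (hK (Set.mem_range_self n))

end Aux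

section Aux2

variable {E : Type*} [NormedAddCommGroup E] [InnerProductSpace ℂ E] [FiniteDimensional ℂ E]

/-- A matrix whose eigenvalues lie in the closed unit disk, with peripheral eigenvalues
semisimple, is power-bounded. -/
lemma power_bdd (B : E →L[ℂ] E)
    (h : ∀ μ : ℂ, Module.End.maxGenEigenspace (B : E →ₗ[ℂ] E) μ ≠ ⊥ →
      ‖μ‖ ≤ 1 ∧ (‖μ‖ = 1 →
        Module.End.maxGenEigenspace (B : E →ₗ[ℂ] E) μ =
          Module.End.eigenspace (B : E →ₗ[ℂ] E) μ)) :
    ∃ K : ℝ, ∀ n : ℕ, ‖B ^ n‖ ≤ K := by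
  have key : ∀ x : E, ∃ K : ℝ, ∀ n : ℕ, ‖(B ^ n) x‖ ≤ K := by
    intro x
    have hx : x ∈ ⨆ μ : ℂ, Module.End.maxGenEigenspace (B : E →ₗ[ℂ] E) μ := by
      rw [Module.End.iSup_maxGenEigenspace_eq_top]; trivial
    refine Submodule.iSup_induction (motive := fun x : E => ∃ K : ℝ, ∀ n : ℕ, ‖(B ^ n) x‖ ≤ K)
      _ hx ?_ ?_ ?_
    · intro μ y hy
      by_cases hy0 : y = 0
      · exact ⟨0, fun n => by simp [hy0]⟩
      have hne : Module.End.maxGenEigenspace (B : E →ₗ[ℂ] E) μ ≠ ⊥ :=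
        (Submodule.ne_bot_iff _).mpr ⟨y, hy, hy0⟩
      obtain ⟨h1, h2⟩ := h μ hne
      rcases lt_or_eq_of_le h1 with hlt | heq'
      · exact orbit_bdd_lt B μ hlt y hy
      · rw [h2 heq'] at hy
        have hBy : B y = μ • y := Module.End.mem_eigenspace_iff.mp hy
        refine ⟨‖y‖, fun n => ?_⟩
        have hn : (B ^ n) y = μ ^ n • y := by
          induction n with
          | zero => simp
          | succ n ih =>
            rw [pow_succ', ContinuousLinearMap.mul_apply, ih, map_smul, hBy, smul_smul,
              ← pow_succ]
        rw [hn, norm_smul, norm_pow, heq', one_pow, one_mul]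
    · exact ⟨0, fun n => by simp⟩
    · rintro a b ⟨K1, h1⟩ ⟨K2, h2⟩
      exact ⟨K1 + K2, fun n => by
        rw [map_add]
        exact le_trans (norm_add_le _ _) (add_le_add (h1 n) (h2 n))⟩
  exact banach_steinhaus key

end Aux2
/-- If `1` is a simple eigenvalue of `M` with rank-one spectral projection `π = |Ω⟩⟨Ω*|`,
all eigenvalues of `M` lie in the closed unit disk, and all eigenvalues of modulus one
(the possible further peripheral eigenvalues besides `1`) are semisimple, then the Cesàro
averages satisfy `‖(1/N) Σ_{n<N} M^n - π‖ ≤ C/N` for some constant `C` and all `N ≥ 1`. -/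
theorem stmt17 {E : Type*} [NormedAddCommGroup E] [InnerProductSpace ℂ E]
    [FiniteDimensional ℂ E]
    (M : E →L[ℂ] E)
    (hdisk : ∀ z ∈ spectrum ℂ M, ‖z‖ ≤ 1)
    (hsemisimple : ∀ z ∈ spectrum ℂ M, ‖z‖ = 1 →
      Module.End.maxGenEigenspace (M : E →ₗ[ℂ] E) z =
        Module.End.eigenspace (M : E →ₗ[ℂ] E) z)
    (Ω : E) (hΩ : Ω ≠ 0) (hMΩ : M Ω = Ω)
    (hsimple : Module.finrank ℂ (Module.End.maxGenEigenspace (M : E →ₗ[ℂ] E) 1) = 1)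
    (Ωs : E) (hΩs : ContinuousLinearMap.adjoint M Ωs = Ωs)
    (hnorm : (inner ℂ Ωs Ω : ℂ) = 1)
    (π : E →L[ℂ] E) (hπ : ∀ x : E, π x = (inner ℂ Ωs x : ℂ) • Ω) :
    ∃ C : ℝ, ∀ N : ℕ, 1 ≤ N →
      ‖((N : ℂ)⁻¹ • ∑ n ∈ Finset.range N, M ^ n) - π‖ ≤ C / N := by
  classical
  -- basic projection identities
  have hπΩ : π Ω = Ω := by rw [hπ, hnorm, one_smul]
  have hπM : π * M = π := by
    ext x
    simp only [ContinuousLinearMap.mul_apply, hπ]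
    rw [← ContinuousLinearMap.adjoint_inner_left, hΩs]
  have hMπ : M * π = π := by
    ext x
    simp only [ContinuousLinearMap.mul_apply, hπ, map_smul, hMΩ]
  have hππ : π * π = π := by
    ext x
    simp only [ContinuousLinearMap.mul_apply, hπ, inner_smul_right, hnorm, mul_one]
  set B : E →L[ℂ] E := M - π with hB
  have hπB : π * B = 0 := by rw [hB, mul_sub, hπM, hππ, sub_self]
  have hBπ : B * π = 0 := by rw [hB, sub_mul, hMπ, hππ, sub_self]
  -- End-level versions
  set M' : Module.End ℂ E := (M : E →ₗ[ℂ] E) with hM'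
  set π' : Module.End ℂ E := (π : E →ₗ[ℂ] E) with hπ'
  set B' : Module.End ℂ E := (B : E →ₗ[ℂ] E) with hB'
  have hB'e : B' = M' - π' := rfl
  have hπB' : π' * B' = 0 := by
    ext x
    have := ContinuousLinearMap.ext_iff.mp hπB x
    simpa [hπ', hB'] using this
  have hBπ' : B' * π' = 0 := by
    ext x
    have := ContinuousLinearMap.ext_iff.mp hBπ x
    simpa [hπ', hB'] using this
  -- the key structural lemma
  have keyμ : ∀ (μ : ℂ), μ ≠ 0 → ∀ (k : ℕ) (y : E), ((B' - μ • 1) ^ k) y = 0 →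
      π y = 0 ∧ ((M' - μ • 1) ^ k) y = 0 := by
    intro μ hμ0 k y hy
    have hπpow : ∀ j : ℕ, π' * (B' - μ • 1) ^ j = (-μ) ^ j • π' := by
      intro j
      induction j with
      | zero => simp
      | succ j ih =>
        rw [pow_succ, ← mul_assoc, ih, smul_mul_assoc, mul_sub, hπB', zero_sub,
          mul_smul_comm, mul_one, pow_succ, ← neg_smul, smul_smul]
    have hπy : π y = 0 := by
      have h1 : (π' * (B' - μ • 1) ^ k) y = 0 := by
        rw [Module.End.mul_apply, hy, map_zero]
      rw [hπpow k, LinearMap.smul_apply] at h1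
      have hne : (-μ) ^ k ≠ 0 := pow_ne_zero _ (neg_ne_zero.mpr hμ0)
      have := (smul_eq_zero.mp h1).resolve_left hne
      exact this
    refine ⟨hπy, ?_⟩
    have hπ'y : π' y = 0 := hπy
    have hcomm : Commute (B' - μ • 1) π' := by
      show (B' - μ • 1) * π' = π' * (B' - μ • 1)
      rw [sub_mul, mul_sub, hBπ', hπB', smul_mul_assoc, mul_smul_comm, one_mul, mul_one]
    have hM'e : M' - μ • 1 = (B' - μ • 1) + π' := by rw [hB'e]; abel
    rw [hM'e, hcomm.add_pow, LinearMap.sum_apply]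
    apply Finset.sum_eq_zero
    intro m hm
    rcases eq_or_lt_of_le (Nat.lt_succ_iff.mp (Finset.mem_range.mp hm)) with hmk | hmk
    · rw [hmk, Nat.sub_self, pow_zero, mul_one, Nat.choose_self, Nat.cast_one, mul_one, hy]
    · obtain ⟨j', hj'⟩ : ∃ j', k - m = j' + 1 := ⟨k - m - 1, by omega⟩
      rw [hj', pow_succ, Module.End.mul_apply, Module.End.mul_apply, Module.End.natCast_apply,
        ← Nat.cast_smul_eq_nsmul ℂ, map_smul, Module.End.mul_apply, hπ'y, map_zero, smul_zero,
        map_zero]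
  -- hypotheses of power-boundedness for B
  have hBspec : ∀ μ : ℂ, Module.End.maxGenEigenspace B' μ ≠ ⊥ →
      ‖μ‖ ≤ 1 ∧ (‖μ‖ = 1 →
        Module.End.maxGenEigenspace B' μ = Module.End.eigenspace B' μ) := by
    intro μ hne
    obtain ⟨y, hy, hy0⟩ := (Submodule.ne_bot_iff _).mp hne
    by_cases hμ0 : μ = 0
    · subst hμ0
      refine ⟨by simp, fun habs => by simp at habs⟩
    rw [Module.End.mem_maxGenEigenspace] at hy
    obtain ⟨k, hk⟩ := hy
    obtain ⟨hπy, hMy⟩ := keyμ μ hμ0 k y hk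
    have heig : Module.End.HasEigenvalue M' μ := by
      refine Module.End.hasEigenvalue_of_hasGenEigenvalue (k := k) ?_
      rw [Module.End.hasGenEigenvalue_iff]
      refine (Submodule.ne_bot_iff _).mpr ⟨y, ?_, hy0⟩
      rw [Module.End.mem_genEigenspace_nat]
      exact hMy
    obtain ⟨v, hv⟩ := heig.exists_hasEigenvector
    have hMv : M v = μ • v := Module.End.mem_eigenspace_iff.mp hv.1
    have hspec : μ ∈ spectrum ℂ M := by
      rw [spectrum.mem_iff]
      intro hu
      obtain ⟨u, hu⟩ := hu
      have hv0 : ((algebraMap ℂ (E →L[ℂ] E) μ) - M) v = 0 := by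
        rw [Algebra.algebraMap_eq_smul_one]
        simp [hMv]
      have : v = 0 := by
        have h1 := congrArg (fun (g : E →L[ℂ] E) => g v) u.inv_mul
        simp only [ContinuousLinearMap.mul_apply, hu, hv0, map_zero,
          ContinuousLinearMap.one_apply] at h1
        exact h1.symm
      exact hv.2 this
    refine ⟨hdisk μ hspec, fun hμ1 => le_antisymm ?_ ?_⟩
    · intro z hz
      rw [Module.End.mem_maxGenEigenspace] at hz
      obtain ⟨k', hk'⟩ := hz
      obtain ⟨hπz, hMz⟩ := keyμ μ hμ0 k' z hk'
      have hzgen : z ∈ Module.End.maxGenEigenspace M' μ :=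
        (Module.End.mem_maxGenEigenspace _ _ _).mpr ⟨k', hMz⟩
      rw [hsemisimple μ hspec hμ1] at hzgen
      have hMz' : M z = μ • z := Module.End.mem_eigenspace_iff.mp hzgen
      rw [Module.End.mem_eigenspace_iff]
      show B z = μ • z
      rw [hB, ContinuousLinearMap.sub_apply, hMz', hπz, sub_zero]
    · intro z hz
      have hBz : B' z = μ • z := Module.End.mem_eigenspace_iff.mp hz
      rw [Module.End.mem_maxGenEigenspace]
      exact ⟨1, by simp [hBz]⟩
  obtain ⟨K, hK⟩ := power_bdd B hBspec
  -- inverse of 1 - B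
  have hzero : ∀ z : E, ((1 : E →L[ℂ] E) - B) z = 0 → z = 0 := by
    intro z hz
    rw [ContinuousLinearMap.sub_apply, ContinuousLinearMap.one_apply, sub_eq_zero] at hz
    -- hz : z = B z
    have hπz : π z = 0 := by
      have h1 := ContinuousLinearMap.ext_iff.mp hπB z
      rw [ContinuousLinearMap.mul_apply, ← hz] at h1
      simpa using h1
    have hMz : M z = z := by
      have : B z = M z - π z := rfl
      rw [← hz, hπz, sub_zero] at this
      exact this.symm
    have hzgen : z ∈ Module.End.maxGenEigenspace M' 1 := by
      rw [Module.End.mem_maxGenEigenspace]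
      refine ⟨1, ?_⟩
      simp [hM', hMz]
    have hΩgen : Submodule.span ℂ {Ω} ≤ Module.End.maxGenEigenspace M' 1 := by
      rw [Submodule.span_singleton_le_iff_mem]
      rw [Module.End.mem_maxGenEigenspace]
      refine ⟨1, ?_⟩
      simp [hM', hMΩ]
    have heqspan : Submodule.span ℂ {Ω} = Module.End.maxGenEigenspace M' 1 := by
      apply Submodule.eq_of_le_of_finrank_le hΩgen
      rw [hsimple, finrank_span_singleton hΩ]
    rw [← heqspan, Submodule.mem_span_singleton] at hzgen
    obtain ⟨c, rfl⟩ := hzgen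
    rw [map_smul, hπΩ] at hπz
    rw [smul_eq_zero] at hπz
    rcases hπz with hc | hΩ0
    · rw [hc, zero_smul]
    · exact absurd hΩ0 hΩ
  have hinj : Function.Injective ((1 : E →L[ℂ] E) - B) := by
    intro a b hab
    have : ((1 : E →L[ℂ] E) - B) (a - b) = 0 := by
      rw [map_sub, hab, sub_self]
    exact sub_eq_zero.mp (hzero _ this)
  obtain ⟨T, hLT⟩ : ∃ T : E →L[ℂ] E, ((1 : E →L[ℂ] E) - B) * T = 1 := by
    have hsurj : Function.Surjective (((1 : E →L[ℂ] E) - B) : E →ₗ[ℂ] E) :=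
      LinearMap.injective_iff_surjective.mp hinj
    refine ⟨LinearMap.toContinuousLinearMap
      ((LinearEquiv.ofBijective (((1 : E →L[ℂ] E) - B) : E →ₗ[ℂ] E)
        ⟨hinj, hsurj⟩).symm : E →ₗ[ℂ] E), ?_⟩
    ext z
    rw [ContinuousLinearMap.mul_apply, ContinuousLinearMap.one_apply]
    show ((1 : E →L[ℂ] E) - B) ((LinearEquiv.ofBijective (((1 : E →L[ℂ] E) - B) : E →ₗ[ℂ] E)
        ⟨hinj, hsurj⟩).symm z) = z
    exact (LinearEquiv.ofBijective (((1 : E →L[ℂ] E) - B) : E →ₗ[ℂ] E)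
        ⟨hinj, hsurj⟩).apply_symm_apply z
  -- uniform bound on geometric sums of B
  have hgeo : ∀ N : ℕ, (∑ n ∈ Finset.range N, B ^ n) = (1 - B ^ N) * T := by
    intro N
    have h1 : (∑ n ∈ Finset.range N, B ^ n) * (1 - B) = 1 - B ^ N := by
      calc (∑ n ∈ Finset.range N, B ^ n) * (1 - B)
          = -((∑ n ∈ Finset.range N, B ^ n) * (B - 1)) := by rw [← mul_neg, neg_sub]
        _ = -(B ^ N - 1) := by rw [geom_sum_mul]
        _ = 1 - B ^ N := neg_sub _ _
    calc (∑ n ∈ Finset.range N, B ^ n)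
        = (∑ n ∈ Finset.range N, B ^ n) * (((1 : E →L[ℂ] E) - B) * T) := by rw [hLT, mul_one]
      _ = ((∑ n ∈ Finset.range N, B ^ n) * ((1 : E →L[ℂ] E) - B)) * T := (mul_assoc _ _ _).symm
      _ = (1 - B ^ N) * T := by rw [h1]
  have hSb : ∀ N : ℕ, ‖∑ n ∈ Finset.range N, B ^ n‖ ≤ (1 + K) * ‖T‖ := by
    intro N
    rw [hgeo]
    refine le_trans (norm_mul_le _ _) ?_
    refine mul_le_mul_of_nonneg_right ?_ (norm_nonneg T)
    refine le_trans (norm_sub_le _ _) ?_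
    exact add_le_add ContinuousLinearMap.norm_id_le (hK N)
  -- power identities
  have hMp : ∀ j : ℕ, M ^ j * π = π := by
    intro j
    induction j with
    | zero => rw [pow_zero, one_mul]
    | succ j ih => rw [pow_succ, mul_assoc, hMπ, ih]
  have hpow : ∀ n : ℕ, B ^ (n + 1) = M ^ (n + 1) - π := by
    intro n
    induction n with
    | zero => rw [pow_one, pow_one, hB]
    | succ n ih =>
      rw [pow_succ, ih, hB, sub_mul, mul_sub, mul_sub, hMp (n + 1), hπM, hππ, ← pow_succ]
      abel
  -- final assembly
  refine ⟨(1 + K) * ‖T‖ + ‖π‖, ?_⟩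
  intro N hN
  have hNc : (N : ℂ) ≠ 0 := Nat.cast_ne_zero.mpr (by omega)
  have hsum : (∑ n ∈ Finset.range N, M ^ n)
      = (∑ n ∈ Finset.range N, B ^ n) + ((N : ℂ) - 1) • π := by
    have hdiff : ∑ n ∈ Finset.range N, (M ^ n - B ^ n) = ((N : ℂ) - 1) • π := by
      rw [Finset.range_eq_Ico, Finset.sum_eq_sum_Ico_succ_bot (by omega : 0 < N)]
      rw [pow_zero, pow_zero, sub_self, zero_add]
      have hval : ∀ n ∈ Finset.Ico 1 N, M ^ n - B ^ n = π := by
        intro n hn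
        have hn1 := (Finset.mem_Ico.mp hn).1
        obtain ⟨m, rfl⟩ : ∃ m, n = m + 1 :=
          ⟨n - 1, by omega⟩
        rw [hpow m]
        abel
      rw [Finset.sum_congr rfl hval, Finset.sum_const, Nat.card_Ico,
        ← Nat.cast_smul_eq_nsmul ℂ, Nat.cast_sub (by omega : 1 ≤ N), Nat.cast_one]
    have h2 : (∑ n ∈ Finset.range N, M ^ n) - (∑ n ∈ Finset.range N, B ^ n)
        = ((N : ℂ) - 1) • π := by
      rw [← Finset.sum_sub_distrib]
      exact hdiff
    rw [← h2]
    abel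
  have hcoef : (N : ℂ)⁻¹ * ((N : ℂ) - 1) = 1 - (N : ℂ)⁻¹ := by
    field_simp
  have hkey : ((N : ℂ)⁻¹ • ∑ n ∈ Finset.range N, M ^ n) - π
      = (N : ℂ)⁻¹ • ((∑ n ∈ Finset.range N, B ^ n) - π) := by
    rw [hsum, smul_add, smul_smul, hcoef, sub_smul, one_smul, smul_sub]
    abel
  rw [hkey]
  have h1 := norm_smul ((N : ℂ)⁻¹) ((∑ n ∈ Finset.range N, B ^ n) - π)
  rw [h1, norm_inv, Complex.norm_natCast, div_eq_inv_mul]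
  refine mul_le_mul_of_nonneg_left ?_ (by positivity)
  exact le_trans (norm_sub_le _ _) (add_le_add (hSb N) le_rfl)
end
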